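/- arXiv:1801.09028 — 4 statements merged into one kernel-verified Lean document; each statement's English description precedes it below -/
import Mathlib

section
/- Let n be a positive integer and w : {-1,1}^n → [0,∞) a weight function with nonempty support. For every β with 0 < β ≤ 1/3, the weighted Rademacher complexity satisfies R(w) ≥ log₂ w_min + (n·log₂(1−β) + log₂ Z(w) − log₂ w_min) / log₂((1−β)/β). -/
open Finset

/-- Map a boolean to the corresponding element of `{-1, 1} ⊆ ℝ`. -/
noncomputable def sgn (b : Bool) : ℝ := if b then 1 else -1

/-- Standard inner product on `ℝ^ι` restricted to the cube `{-1,1}^ι`. -/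
noncomputable def ip {ι : Type*} [Fintype ι] [DecidableEq ι] (c x : ι → Bool) : ℝ :=
  ∑ i, sgn (c i) * sgn (x i)

/-- `δ(c, w)`: the maximum over the support of `w` of `⟨c,x⟩ + log₂ w(x)`. -/
noncomputable def wdelta {ι : Type*} [Fintype ι] [DecidableEq ι] (c : ι → Bool) (w : (ι → Bool) → ℝ) : ℝ :=
  sSup {y : ℝ | ∃ x, 0 < w x ∧ y = ip c x + Real.logb 2 (w x)}

/-- The weighted Rademacher complexity `R(w) = E_c[δ(c,w)]`, `c` uniform on the cube. -/
noncomputable def wRad {ι : Type*} [Fintype ι] [DecidableEq ι] (w : (ι → Bool) → ℝ) : ℝ :=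
  (∑ c : ι → Bool, wdelta c w) / 2 ^ (Fintype.card ι)

/-- `Z(w)`: the total weight. -/
noncomputable def Zw {ι : Type*} [Fintype ι] [DecidableEq ι] (w : (ι → Bool) → ℝ) : ℝ := ∑ x, w x

/-- `w_min`: the smallest positive weight. -/
noncomputable def wmin {ι : Type*} [Fintype ι] [DecidableEq ι] (w : (ι → Bool) → ℝ) : ℝ :=
  sInf {y : ℝ | ∃ x, 0 < w x ∧ y = w x}

/-- `w_max`: the largest weight. -/
noncomputable def wmax {ι : Type*} [Fintype ι] [DecidableEq ι] (w : (ι → Bool) → ℝ) : ℝ :=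
  sSup {y : ℝ | ∃ x, y = w x}
/-!
Put `t = 1 / log₂((1-β)/β)`, so that `0 < t ≤ 1` because `β ≤ 1/3`. Writing
`log₂ w(x) = t log₂ w(x) + (1-t) log₂ w(x)` and bounding the second part by `(1-t) log₂ w_min`, it
suffices to find a selector `c ↦ X c` in the support of `w` with
`E_c[⟨c, X c⟩ + t log₂ w(X c)] ≥ t (log₂ Z(w) + n log₂(1-β))`.
This is done by induction on `n`, splitting the cube along the first coordinate into halves of
masses `Z₀ + Z₁ = Z`. If one half has mass at least `(1-β) Z`, the selector stays in that half
whatever `c₀` is: the first coordinate contributes nothing to `⟨c, X c⟩` on average and the mass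
loses at most a factor `1-β`. Otherwise both halves have mass at least `β Z`, so
`Z₀ Z₁ ≥ β (1-β) Z²`; the selector copies `c₀`, gaining `1` in `⟨c, X c⟩`, which pays for the
loss `t log₂((1-β)/β) / 2 ≤ 1/2` in the mass term.
-/

open Real

lemma sgn_mul_self (b : Bool) : sgn b * sgn b = 1 := by
  cases b <;> norm_num [sgn]

lemma sgn_false_add_sgn_true : sgn false + sgn true = 0 := by
  norm_num [sgn]

lemma ip_cons {n : ℕ} (a b : Bool) (c x : Fin n → Bool) :
    ip (Fin.cons a c) (Fin.cons b x) = sgn a * sgn b + ip c x := by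
  simp [ip, Fin.sum_univ_succ]

lemma sum_cube_succ {n : ℕ} (f : (Fin (n + 1) → Bool) → ℝ) :
    ∑ c, f c = ∑ c : Fin n → Bool, (f (Fin.cons false c) + f (Fin.cons true c)) := by
  rw [← Fintype.sum_equiv (Fin.consEquiv fun _ => Bool) (fun p => f (Fin.cons p.1 p.2)) f
    fun _ => rfl, Fintype.sum_prod_type_right]
  simp only [Fintype.sum_bool, add_comm]

section Selector

variable {ι : Type*} [Fintype ι] [DecidableEq ι]

lemma wmin_le {w : (ι → Bool) → ℝ} {x : ι → Bool} (hx : 0 < w x) : wmin w ≤ w x :=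
  csInf_le ((Set.finite_range w).subset (by rintro _ ⟨y, -, rfl⟩; exact ⟨y, rfl⟩)).bddBelow
    ⟨x, hx, rfl⟩

lemma wmin_pos {w : (ι → Bool) → ℝ} (hw : ∃ x, 0 < w x) : 0 < wmin w := by
  have hfin : {y | ∃ x, 0 < w x ∧ y = w x}.Finite :=
    (Set.finite_range w).subset (by rintro _ ⟨y, -, rfl⟩; exact ⟨y, rfl⟩)
  obtain ⟨x, hx⟩ := hw
  obtain ⟨y, hy, hmin⟩ : wmin w ∈ {y | ∃ x, 0 < w x ∧ y = w x} :=
    Set.Nonempty.csInf_mem ⟨w x, x, hx, rfl⟩ hfin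
  exact hmin ▸ hy

lemma le_wdelta {w : (ι → Bool) → ℝ} (c : ι → Bool) {x : ι → Bool} (hx : 0 < w x) :
    ip c x + logb 2 (w x) ≤ wdelta c w :=
  le_csSup ((Set.finite_range fun y => ip c y + logb 2 (w y)).subset
    (by rintro _ ⟨y, -, rfl⟩; exact ⟨y, rfl⟩)).bddAbove ⟨x, hx, rfl⟩

noncomputable def score (t : ℝ) (w : (ι → Bool) → ℝ) (X : (ι → Bool) → ι → Bool) : ℝ :=
  ∑ c, (ip c (X c) + t * logb 2 (w (X c)))

lemma score_add_le_sum_wdelta {t : ℝ} (ht : t ≤ 1) {w : (ι → Bool) → ℝ}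
    {X : (ι → Bool) → ι → Bool} (hX : ∀ c, 0 < w (X c)) :
    score t w X + 2 ^ Fintype.card ι * ((1 - t) * logb 2 (wmin w)) ≤ ∑ c, wdelta c w := by
  have hterm (c : ι → Bool) :
      ip c (X c) + t * logb 2 (w (X c)) + (1 - t) * logb 2 (wmin w) ≤ wdelta c w := by
    have hlog : logb 2 (wmin w) ≤ logb 2 (w (X c)) :=
      logb_le_logb_of_le one_lt_two (wmin_pos ⟨_, hX c⟩) (wmin_le (hX c))
    nlinarith [le_wdelta c (hX c), mul_le_mul_of_nonneg_left hlog (sub_nonneg.2 ht)]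
  calc score t w X + 2 ^ Fintype.card ι * ((1 - t) * logb 2 (wmin w))
      = ∑ c, (ip c (X c) + t * logb 2 (w (X c)) + (1 - t) * logb 2 (wmin w)) := by
        simp [score, Finset.sum_add_distrib]
    _ ≤ ∑ c, wdelta c w := Finset.sum_le_sum fun c _ => hterm c

end Selector

section Induction

variable {n : ℕ}

def sliceFirst (w : (Fin (n + 1) → Bool) → ℝ) (b : Bool) : (Fin n → Bool) → ℝ :=
  fun x => w (Fin.cons b x)

lemma Zw_eq_sliceFirst_add (w : (Fin (n + 1) → Bool) → ℝ) :
    Zw w = Zw (sliceFirst w false) + Zw (sliceFirst w true) := by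
  simp only [Zw, sliceFirst, sum_cube_succ w, Finset.sum_add_distrib]

lemma Zw_sliceFirst_add_sliceFirst_not (w : (Fin (n + 1) → Bool) → ℝ) (b : Bool) :
    Zw (sliceFirst w b) + Zw (sliceFirst w !b) = Zw w := by
  cases b <;> simp only [Zw_eq_sliceFirst_add w, Bool.not_false, Bool.not_true, add_comm]

lemma score_cons_const (t : ℝ) (w : (Fin (n + 1) → Bool) → ℝ) (b : Bool)
    (X : (Fin n → Bool) → Fin n → Bool) :
    score t w (fun c => Fin.cons b (X (Fin.tail c))) = 2 * score t (sliceFirst w b) X := by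
  simp only [score, sum_cube_succ, Fin.tail_cons, ip_cons, sliceFirst, Finset.mul_sum]
  refine Finset.sum_congr rfl fun c _ => ?_
  linear_combination sgn b * sgn_false_add_sgn_true

lemma score_cons_diag (t : ℝ) (w : (Fin (n + 1) → Bool) → ℝ)
    (X : Bool → (Fin n → Bool) → Fin n → Bool) :
    score t w (fun c => Fin.cons (c 0) (X (c 0) (Fin.tail c))) =
      2 ^ (n + 1) + score t (sliceFirst w false) (X false) +
        score t (sliceFirst w true) (X true) := by
  have hcard : (2 : ℝ) ^ (n + 1) = ∑ _c : Fin n → Bool, (2 : ℝ) := by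
    simp [pow_succ]
  simp only [score, sum_cube_succ, Fin.cons_zero, Fin.tail_cons, ip_cons, sgn_mul_self, sliceFirst,
    hcard, ← Finset.sum_add_distrib]
  exact Finset.sum_congr rfl fun c _ => by ring

variable {β t : ℝ}

def IsGoodSelector (β t : ℝ) (w : (Fin n → Bool) → ℝ) (X : (Fin n → Bool) → Fin n → Bool) :
    Prop :=
  (∀ c, 0 < w (X c)) ∧ 2 ^ n * (t * (logb 2 (Zw w) + n * logb 2 (1 - β))) ≤ score t w X

lemma isGoodSelector_zero (w : (Fin 0 → Bool) → ℝ) (hZ : 0 < Zw w) :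
    IsGoodSelector β t w id := by
  have hw (c : Fin 0 → Bool) : Zw w = w c := by
    simp [Zw, Subsingleton.elim _ c]
  refine ⟨fun c => hw c ▸ hZ, ?_⟩
  simp [score, ip, ← hw]

lemma isGoodSelector_cons_const (hβ : β < 1) (ht : 0 ≤ t) {w : (Fin (n + 1) → Bool) → ℝ}
    (hZ : 0 < Zw w) {b : Bool} (hheavy : (1 - β) * Zw w ≤ Zw (sliceFirst w b))
    {X : (Fin n → Bool) → Fin n → Bool} (hX : IsGoodSelector β t (sliceFirst w b) X) :
    IsGoodSelector β t w (fun c => Fin.cons b (X (Fin.tail c))) := by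
  refine ⟨fun c => hX.1 _, ?_⟩
  have hlog : logb 2 (1 - β) + logb 2 (Zw w) ≤ logb 2 (Zw (sliceFirst w b)) := by
    rw [← logb_mul (by linarith) hZ.ne']
    exact logb_le_logb_of_le one_lt_two (by have := sub_pos.2 hβ; positivity) hheavy
  rw [score_cons_const, pow_succ]
  push_cast
  linarith [hX.2, mul_le_mul_of_nonneg_left (mul_le_mul_of_nonneg_left hlog ht)
    (by positivity : (0 : ℝ) ≤ 2 ^ n)]

lemma logb_add_logb_le_of_balanced (hβ0 : 0 < β) (hβ1 : β < 1) {a b : ℝ}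
    (ha : β * (a + b) ≤ a) (hb : β * (a + b) ≤ b) (hab : 0 < a + b) :
    logb 2 β + logb 2 (1 - β) + 2 * logb 2 (a + b) ≤ logb 2 a + logb 2 b := by
  have hβ1' : 0 < 1 - β := sub_pos.2 hβ1
  have hpos : 0 < β * (a + b) := mul_pos hβ0 hab
  -- `a b - β (1-β) (a+b)² = (a - β (a+b)) (b - β (a+b))`
  have hprod : β * (1 - β) * (a + b) ^ 2 ≤ a * b := by
    nlinarith [mul_nonneg (sub_nonneg.2 ha) (sub_nonneg.2 hb)]
  have h := logb_le_logb_of_le one_lt_two (by positivity) hprod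
  rwa [logb_mul (by positivity) (by positivity), logb_mul hβ0.ne' hβ1'.ne', logb_pow,
    logb_mul (by linarith) (by linarith)] at h

lemma isGoodSelector_cons_diag (hβ0 : 0 < β) (hβ1 : β < 1) (ht : 0 ≤ t)
    (htL : t * logb 2 ((1 - β) / β) ≤ 2) {w : (Fin (n + 1) → Bool) → ℝ} (hZ : 0 < Zw w)
    (hbal : ∀ b, β * Zw w ≤ Zw (sliceFirst w b)) {X : Bool → (Fin n → Bool) → Fin n → Bool}
    (hX : ∀ b, IsGoodSelector β t (sliceFirst w b) (X b)) :
    IsGoodSelector β t w (fun c => Fin.cons (c 0) (X (c 0) (Fin.tail c))) := by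
  refine ⟨fun c => (hX (c 0)).1 _, ?_⟩
  have hsplit := Zw_eq_sliceFirst_add w
  have hlog := logb_add_logb_le_of_balanced hβ0 hβ1 (hsplit ▸ hbal false) (hsplit ▸ hbal true)
    (hsplit ▸ hZ)
  rw [← hsplit] at hlog
  rw [logb_div (sub_pos.2 hβ1).ne' hβ0.ne'] at htL
  rw [score_cons_diag, pow_succ]
  have h2n : (0 : ℝ) ≤ 2 ^ n := by positivity
  push_cast
  linarith [(hX false).2, (hX true).2, mul_le_mul_of_nonneg_left htL h2n,
    mul_le_mul_of_nonneg_left (mul_le_mul_of_nonneg_left hlog ht) h2n]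

theorem exists_isGoodSelector (hβ0 : 0 < β) (hβ1 : β < 1) (ht : 0 ≤ t)
    (htL : t * logb 2 ((1 - β) / β) ≤ 2) :
    ∀ {n : ℕ} (w : (Fin n → Bool) → ℝ), 0 < Zw w → ∃ X, IsGoodSelector β t w X
  | 0, w, hZ => ⟨id, isGoodSelector_zero w hZ⟩
  | n + 1, w, hZ => by
    have hslice_pos {b : Bool} {γ : ℝ} (hγ : 0 < γ) (h : γ * Zw w ≤ Zw (sliceFirst w b)) :
        0 < Zw (sliceFirst w b) :=
      (mul_pos hγ hZ).trans_le h
    by_cases hbal : ∀ b, β * Zw w ≤ Zw (sliceFirst w b)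
    · choose X hX using fun b =>
        exists_isGoodSelector hβ0 hβ1 ht htL _ (hslice_pos hβ0 (hbal b))
      exact ⟨_, isGoodSelector_cons_diag hβ0 hβ1 ht htL hZ hbal hX⟩
    · obtain ⟨b, hlight⟩ := not_forall.1 hbal
      have hheavy : (1 - β) * Zw w ≤ Zw (sliceFirst w !b) := by
        linarith [Zw_sliceFirst_add_sliceFirst_not w b]
      obtain ⟨X, hX⟩ := exists_isGoodSelector hβ0 hβ1 ht htL _
        (hslice_pos (sub_pos.2 hβ1) hheavy)
      exact ⟨_, isGoodSelector_cons_const hβ1 ht hZ hheavy hX⟩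

end Induction

theorem stmt0_general (n : ℕ) (w : (Fin n → Bool) → ℝ)
    (hw : ∀ x, 0 ≤ w x) (hsupp : ∃ x, 0 < w x)
    (β : ℝ) (hβ0 : 0 < β) (hβ1 : β ≤ 1 / 3) :
    wRad w ≥ Real.logb 2 (wmin w) +
      ((n : ℝ) * Real.logb 2 (1 - β) + Real.logb 2 (Zw w) - Real.logb 2 (wmin w)) /
        Real.logb 2 ((1 - β) / β) := by
  set L := logb 2 ((1 - β) / β)
  have hL : 1 ≤ L := by
    rw [← logb_self_eq_one one_lt_two]
    exact logb_le_logb_of_le one_lt_two two_pos (by rw [le_div_iff₀ hβ0]; linarith)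
  have htL : L⁻¹ * L = 1 := inv_mul_cancel₀ (by linarith)
  have hZ : 0 < Zw w := by
    obtain ⟨x, hx⟩ := hsupp
    exact Finset.sum_pos' (fun y _ => hw y) ⟨x, Finset.mem_univ x, hx⟩
  obtain ⟨X, hXpos, hX⟩ := exists_isGoodSelector (t := L⁻¹) hβ0 (by linarith)
    (inv_nonneg.2 (by linarith)) (by linarith) w hZ
  have hsum := score_add_le_sum_wdelta (inv_le_one_of_one_le₀ hL) hXpos
  rw [Fintype.card_fin] at hsum
  rw [ge_iff_le, wRad, Fintype.card_fin, le_div_iff₀ (by positivity)]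
  calc (logb 2 (wmin w) + (n * logb 2 (1 - β) + logb 2 (Zw w) - logb 2 (wmin w)) / L) * 2 ^ n
      = 2 ^ n * (L⁻¹ * (logb 2 (Zw w) + n * logb 2 (1 - β)))
          + 2 ^ n * ((1 - L⁻¹) * logb 2 (wmin w)) := by ring
    _ ≤ ∑ c, wdelta c w := by linarith

theorem stmt0 (n : ℕ) (hn : 0 < n) (w : (Fin n → Bool) → ℝ)
    (hw : ∀ x, 0 ≤ w x) (hsupp : ∃ x, 0 < w x)
    (β : ℝ) (hβ0 : 0 < β) (hβ1 : β ≤ 1 / 3) :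
    wRad w ≥ Real.logb 2 (wmin w) +
      ((n : ℝ) * Real.logb 2 (1 - β) + Real.logb 2 (Zw w) - Real.logb 2 (wmin w)) /
        Real.logb 2 ((1 - β) / β) :=
  stmt0_general n w hw hsupp β hβ0 hβ1
end

section
/- Let n be a positive integer and w : {-1,1}^n → [0,∞) a weight function with nonempty support. For all real λ > 0 and γ > 0 with λγ ≥ 1, writing w^γ for the weight function x ↦ w(x)^γ (whose support equals that of w), one has R(w^γ) ≤ (1/λ)·log₂ Z(w) + ((λγ − 1)/λ)·log₂ w_max + λn/2. -/
open Finset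

/-! For each sign vector `c`, multiplying `δ(c, w^γ)` by `λ` splits `λγ log₂ w(x)` as
`log₂ w(x) + (λγ - 1) log₂ w(x)`; bounding the second part by `w_max` and the rest by a
log-sum-exp gives `λ δ(c, w^γ) ≤ log₂ Σ_x w(x) 2^{λ⟨c,x⟩} + (λγ - 1) log₂ w_max`.
Averaging over `c`, Jensen's inequality for the concave `log₂` moves the average inside the
logarithm, where the moment generating function of `⟨c,x⟩` factors over the coordinates into
`((2^λ + 2^{-λ}) / 2)^n ≤ 2^{λ²n/2}`. -/

open Real
open scoped BigOperators

variable {ι : Type*} [Fintype ι] [DecidableEq ι]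

lemma two_rpow_add_two_rpow_neg_le (t : ℝ) : (2 : ℝ) ^ t + 2 ^ (-t) ≤ 2 * 2 ^ (t ^ 2 / 2) := by
  have hlog : 0 ≤ log 2 ∧ log 2 ≤ 1 :=
    ⟨log_nonneg one_le_two, by linarith [log_le_sub_one_of_pos two_pos]⟩
  -- `cosh x ≤ exp (x² / 2)` at `x = t log 2`, and `(t log 2)² ≤ t² log 2` since `log 2 ≤ 1`
  have hcosh := cosh_le_exp_half_sq (log 2 * t)
  have hsq : (log 2 * t) ^ 2 / 2 ≤ log 2 * (t ^ 2 / 2) := by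
    nlinarith [mul_nonneg (mul_nonneg hlog.1 (sub_nonneg.2 hlog.2)) (sq_nonneg t)]
  rw [cosh_eq, ← mul_neg] at hcosh
  simp only [rpow_def_of_pos two_pos]
  linarith [exp_le_exp.2 hsq]

lemma expect_prod_apply {κ K : Type*} [Fintype κ] [Semifield K] [CharZero K] (f : ι → κ → K) :
    𝔼 c : ι → κ, ∏ i, f i (c i) = ∏ i, 𝔼 b, f i b := by
  simp only [Fintype.expect_eq_sum_div_card, ← Fintype.prod_sum, prod_div_distrib, prod_const,
    Fintype.card_fun, card_univ]
  push_cast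
  rfl

lemma expect_two_rpow_mul_ip_le (lam : ℝ) (x : ι → Bool) :
    𝔼 c, (2 : ℝ) ^ (lam * ip c x) ≤ 2 ^ (lam ^ 2 * Fintype.card ι / 2) := by
  have hfactor : ∀ c : ι → Bool,
      (2 : ℝ) ^ (lam * ip c x) = ∏ i, (2 : ℝ) ^ (lam * (sgn (c i) * sgn (x i))) := by
    intro c
    rw [ip, mul_sum, rpow_sum_of_pos two_pos]
  have hcoord : ∀ s : Bool, 𝔼 b, (2 : ℝ) ^ (lam * (sgn b * sgn s)) ≤ 2 ^ (lam ^ 2 / 2) := by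
    intro s
    have := two_rpow_add_two_rpow_neg_le lam
    rw [Fintype.expect_eq_sum_div_card, Fintype.sum_bool, Fintype.card_bool]
    cases s <;> norm_num [sgn] <;> linarith
  calc 𝔼 c, (2 : ℝ) ^ (lam * ip c x)
      = ∏ i, 𝔼 b, (2 : ℝ) ^ (lam * (sgn b * sgn (x i))) := by
        simp only [hfactor]
        exact expect_prod_apply fun i b => (2 : ℝ) ^ (lam * (sgn b * sgn (x i)))
    _ ≤ ∏ _i : ι, (2 : ℝ) ^ (lam ^ 2 / 2) :=
        prod_le_prod (fun i _ => expect_nonneg fun b _ => by positivity) fun i _ => hcoord (x i)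
    _ = 2 ^ (lam ^ 2 * Fintype.card ι / 2) := by
        rw [prod_const, card_univ, ← rpow_mul_natCast two_pos.le]
        ring_nf

lemma expect_sum_mul_two_rpow_mul_ip_le {w : (ι → Bool) → ℝ} (hw : ∀ x, 0 ≤ w x) (lam : ℝ) :
    𝔼 c, ∑ x, w x * (2 : ℝ) ^ (lam * ip c x) ≤ Zw w * 2 ^ (lam ^ 2 * Fintype.card ι / 2) := by
  rw [expect_sum_comm, Zw, sum_mul]
  gcongr with x
  rw [← mul_expect]
  exact mul_le_mul_of_nonneg_left (expect_two_rpow_mul_ip_le lam x) (hw x)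

lemma expect_logb_le_logb_expect {α : Type*} [Fintype α] [Nonempty α] {b : ℝ} (hb : 1 ≤ b)
    {f : α → ℝ} (hf : ∀ a, 0 < f a) : 𝔼 a, logb b (f a) ≤ logb b (𝔼 a, f a) := by
  have hweights : ∑ _a : α, (Fintype.card α : ℝ)⁻¹ = 1 := by
    simp [Fintype.card_ne_zero]
  have hjensen := strictConcaveOn_log_Ioi.concaveOn.le_map_sum (fun _ _ => by positivity) hweights
    fun a _ => Set.mem_Ioi.2 (hf a)
  simp only [smul_eq_mul, inv_mul_eq_div, ← sum_div, ← Fintype.expect_eq_sum_div_card] at hjensen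
  simp only [logb, ← expect_div]
  exact div_le_div_of_nonneg_right hjensen (log_nonneg hb)

lemma le_wmax (w : (ι → Bool) → ℝ) (x : ι → Bool) : w x ≤ wmax w :=
  le_csSup ((Set.finite_range w).bddAbove.mono <| by rintro _ ⟨y, rfl⟩; exact ⟨y, rfl⟩) ⟨x, rfl⟩

lemma add_logb_le_logb_sum_mul_two_rpow {α : Type*} [Fintype α] {w : α → ℝ} (hw : ∀ x, 0 ≤ w x)
    (a : α → ℝ) {x : α} (hx : 0 < w x) :
    a x + logb 2 (w x) ≤ logb 2 (∑ y, w y * (2 : ℝ) ^ a y) := by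
  have hterm : w x * (2 : ℝ) ^ a x ≤ ∑ y, w y * (2 : ℝ) ^ a y :=
    single_le_sum (f := fun y => w y * (2 : ℝ) ^ a y) (fun y _ => by have := hw y; positivity)
      (mem_univ x)
  calc a x + logb 2 (w x) = logb 2 (w x * (2 : ℝ) ^ a x) := by
        rw [logb_mul hx.ne' (by positivity), logb_rpow two_pos (by norm_num), add_comm]
    _ ≤ _ := logb_le_logb_of_le one_lt_two (by positivity) hterm

lemma wdelta_rpow_le {w : (ι → Bool) → ℝ} (hw : ∀ x, 0 ≤ w x) (hsupp : ∃ x, 0 < w x)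
    {lam gam : ℝ} (hlam : 0 < lam) (hlg : 1 ≤ lam * gam) (c : ι → Bool) :
    wdelta c (fun x => w x ^ gam) ≤
      (logb 2 (∑ x, w x * (2 : ℝ) ^ (lam * ip c x)) + (lam * gam - 1) * logb 2 (wmax w)) / lam := by
  have hgam : 0 < gam := pos_of_mul_pos_right (by linarith) hlam.le
  obtain ⟨x₀, hx₀⟩ := hsupp
  refine csSup_le ⟨_, x₀, rpow_pos_of_pos hx₀ gam, rfl⟩ ?_
  rintro _ ⟨x, hxgam, rfl⟩
  have hx : 0 < w x :=
    (hw x).lt_of_ne fun h => by simp [← h, zero_rpow hgam.ne'] at hxgam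
  rw [le_div_iff₀' hlam, logb_rpow_eq_mul_logb_of_pos hx]
  have hlse := add_logb_le_logb_sum_mul_two_rpow hw (fun y => lam * ip c y) hx
  have hmax : (lam * gam - 1) * logb 2 (w x) ≤ (lam * gam - 1) * logb 2 (wmax w) :=
    mul_le_mul_of_nonneg_left (logb_le_logb_of_le one_lt_two hx (le_wmax w x)) (by linarith)
  linarith

lemma wRad_eq_expect (w : (ι → Bool) → ℝ) : wRad w = 𝔼 c, wdelta c w := by
  rw [wRad, Fintype.expect_eq_sum_div_card, Fintype.card_fun, Fintype.card_bool]
  push_cast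
  rfl

theorem stmt3_general (n : ℕ) (w : (Fin n → Bool) → ℝ)
    (hw : ∀ x, 0 ≤ w x) (hsupp : ∃ x, 0 < w x)
    (lam gam : ℝ) (hlam : 0 < lam) (hlg : 1 ≤ lam * gam) :
    wRad (fun x => w x ^ gam) ≤
      (1 / lam) * Real.logb 2 (Zw w) + ((lam * gam - 1) / lam) * Real.logb 2 (wmax w)
        + lam * n / 2 := by
  set T : (Fin n → Bool) → ℝ := fun c => ∑ x, w x * (2 : ℝ) ^ (lam * ip c x)
  set K := (lam * gam - 1) * logb 2 (wmax w)
  obtain ⟨x₀, hx₀⟩ := hsupp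
  have hT : ∀ c, 0 < T c := fun c =>
    sum_pos' (fun y _ => by have := hw y; positivity) ⟨x₀, mem_univ _, by positivity⟩
  have hZ : 0 < Zw w := sum_pos' (fun y _ => hw y) ⟨x₀, mem_univ _, hx₀⟩
  calc wRad (fun x => w x ^ gam)
      = 𝔼 c, wdelta c (fun x => w x ^ gam) := wRad_eq_expect _
    _ ≤ 𝔼 c, (logb 2 (T c) + K) / lam :=
        expect_le_expect fun c _ => wdelta_rpow_le hw ⟨x₀, hx₀⟩ hlam hlg c
    _ = (𝔼 c, logb 2 (T c) + K) / lam := by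
        rw [← expect_div, expect_add_distrib, expect_const univ_nonempty]
    _ ≤ (logb 2 (𝔼 c, T c) + K) / lam := by
        gcongr
        exact expect_logb_le_logb_expect one_le_two hT
    _ ≤ (logb 2 (Zw w * 2 ^ (lam ^ 2 * n / 2)) + K) / lam := by
        gcongr (?_ + _) / _
        refine logb_le_logb_of_le one_lt_two (expect_pos (fun c _ => hT c) univ_nonempty) ?_
        simpa using expect_sum_mul_two_rpow_mul_ip_le hw lam
    _ = _ := by
        rw [logb_mul hZ.ne' (by positivity), logb_rpow two_pos (by norm_num)]
        field_simp
        ring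

theorem stmt3 (n : ℕ) (hn : 0 < n) (w : (Fin n → Bool) → ℝ)
    (hw : ∀ x, 0 ≤ w x) (hsupp : ∃ x, 0 < w x)
    (lam gam : ℝ) (hlam : 0 < lam) (hgam : 0 < gam) (hlg : 1 ≤ lam * gam) :
    wRad (fun x => w x ^ gam) ≤
      (1 / lam) * Real.logb 2 (Zw w) + ((lam * gam - 1) / lam) * Real.logb 2 (wmax w)
        + lam * n / 2 :=
  stmt3_general n w hw hsupp lam gam hlam hlg
end

section
/- Let n be a positive integer and w : {-1,1}^n → [0,∞) a weight function with nonempty support. Then log₂ Z(w) ≥ R(w) − n/2. -/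
open Finset

/-!
Each `δ(c, w)` is at most `log₂ Σₓ w(x) 2^⟨c,x⟩`, a maximum of logarithms being at most the
logarithm of the sum. Averaging over `c` and applying Jensen to the concave `log₂` bounds `R(w)` by
`log₂ E_c Σₓ w(x) 2^⟨c,x⟩`. The expectation factorises over the coordinates: it equals
`Z(w) ((2 + 2⁻¹) / 2)ⁿ = Z(w) (5/4)ⁿ`, and `log₂ (5/4) ≤ 1/2`.
-/

open Real

section Cube

variable {ι : Type*} [Fintype ι] [DecidableEq ι]

theorem sum_rpow_ip {b : ℝ} (hb : 0 < b) (x : ι → Bool) :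
    ∑ c : ι → Bool, b ^ ip c x = (b + b⁻¹) ^ Fintype.card ι := by
  have hfactor : ∀ i, ∑ β : Bool, b ^ (sgn β * sgn (x i)) = b + b⁻¹ := by
    intro i
    cases x i <;> simp [sgn, rpow_neg_one, add_comm]
  simp_rw [ip, rpow_sum_of_pos hb]
  rw [← Fintype.prod_sum fun i (β : Bool) => b ^ (sgn β * sgn (x i))]
  simp only [hfactor, prod_const, card_univ]

theorem wdelta_le_logb_sum {w : (ι → Bool) → ℝ} (hw : ∀ x, 0 ≤ w x) (hsupp : ∃ x, 0 < w x)
    (c : ι → Bool) : wdelta c w ≤ logb 2 (∑ x, w x * 2 ^ ip c x) := by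
  obtain ⟨x₀, hx₀⟩ := hsupp
  refine csSup_le ⟨_, x₀, hx₀, rfl⟩ ?_
  rintro _ ⟨x, hx, rfl⟩
  have hterm : ip c x + logb 2 (w x) = logb 2 (w x * 2 ^ ip c x) := by
    rw [logb_mul hx.ne' (by positivity), logb_rpow two_pos (by norm_num), add_comm]
  rw [hterm]
  exact logb_le_logb_of_le one_lt_two (by positivity)
    (single_le_sum (f := fun y => w y * 2 ^ ip c y)
      (fun y _ => mul_nonneg (hw y) (by positivity)) (mem_univ x))

theorem sum_sum_mul_rpow_ip (w : (ι → Bool) → ℝ) :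
    ∑ c : ι → Bool, ∑ x, w x * 2 ^ ip c x = Zw w * (5 / 2) ^ Fintype.card ι := by
  rw [sum_comm, Zw, sum_mul]
  refine sum_congr rfl fun x _ => ?_
  rw [← mul_sum, sum_rpow_ip two_pos]
  norm_num

end Cube

theorem sum_logb_div_card_le_logb_sum_div_card {ι : Type*} (s : Finset ι) {b : ℝ} (hb : 1 < b)
    {f : ι → ℝ} (hf : ∀ i ∈ s, 0 < f i) :
    (∑ i ∈ s, logb b (f i)) / #s ≤ logb b ((∑ i ∈ s, f i) / #s) := by
  rcases s.eq_empty_or_nonempty with rfl | hs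
  · simp
  have hjensen := strictConcaveOn_log_Ioi.concaveOn.le_map_sum (t := s) (w := fun _ => (#s : ℝ)⁻¹)
    (p := f) (fun _ _ => by positivity) (by simp [hs.card_ne_zero]) hf
  simp only [smul_eq_mul, ← mul_sum] at hjensen
  simp only [logb, ← sum_div, div_right_comm _ (log b)]
  refine div_le_div_of_nonneg_right ?_ (log_nonneg hb.le)
  simpa only [div_eq_inv_mul] using hjensen

theorem logb_two_five_div_four_le : logb 2 (5 / 4) ≤ 1 / 2 := by
  rw [logb_le_iff_le_rpow one_lt_two (by norm_num), ← sqrt_eq_rpow]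
  exact le_sqrt_of_sq_le (by norm_num)

theorem wRad_le_logb_Zw_add {ι : Type*} [Fintype ι] [DecidableEq ι] {w : (ι → Bool) → ℝ}
    (hw : ∀ x, 0 ≤ w x) (hsupp : ∃ x, 0 < w x) :
    wRad w ≤ logb 2 (Zw w) + Fintype.card ι * logb 2 (5 / 4) := by
  obtain ⟨x₀, hx₀⟩ := hsupp
  have hZ : 0 < Zw w := sum_pos' (fun x _ => hw x) ⟨x₀, mem_univ _, hx₀⟩
  have hcard : ((Fintype.card (ι → Bool) : ℕ) : ℝ) = 2 ^ Fintype.card ι := by simp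
  calc wRad w
      ≤ (∑ c : ι → Bool, logb 2 (∑ x, w x * 2 ^ ip c x)) / 2 ^ Fintype.card ι := by
        rw [wRad]
        gcongr with c
        exact wdelta_le_logb_sum hw ⟨x₀, hx₀⟩ c
    _ ≤ logb 2 ((∑ c : ι → Bool, ∑ x, w x * 2 ^ ip c x) / 2 ^ Fintype.card ι) := by
        rw [← hcard, ← card_univ]
        exact sum_logb_div_card_le_logb_sum_div_card _ one_lt_two fun c _ =>
          sum_pos' (fun x _ => mul_nonneg (hw x) (by positivity))
            ⟨x₀, mem_univ _, mul_pos hx₀ (by positivity)⟩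
    _ = logb 2 (Zw w) + Fintype.card ι * logb 2 (5 / 4) := by
        rw [sum_sum_mul_rpow_ip, mul_div_assoc, ← div_pow, logb_mul hZ.ne' (by positivity),
          logb_pow]
        norm_num

theorem stmt7_general (n : ℕ) (w : (Fin n → Bool) → ℝ)
    (hw : ∀ x, 0 ≤ w x) (hsupp : ∃ x, 0 < w x) :
    Real.logb 2 (Zw w) ≥ wRad w - n / 2 := by
  have hRad := wRad_le_logb_Zw_add hw hsupp
  rw [Fintype.card_fin] at hRad
  linarith [mul_le_mul_of_nonneg_left logb_two_five_div_four_le (Nat.cast_nonneg (α := ℝ) n)]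

theorem stmt7 (n : ℕ) (hn : 0 < n) (w : (Fin n → Bool) → ℝ)
    (hw : ∀ x, 0 ≤ w x) (hsupp : ∃ x, 0 < w x) :
    Real.logb 2 (Zw w) ≥ wRad w - n / 2 :=
  stmt7_general n w hw hsupp
end

section
/- Let n be a positive integer and w : {-1,1}^n → [0,∞) a weight function with nonempty support. For all real λ > 0 and γ > 0, writing w^γ for the weight function x ↦ w(x)^γ, one has R(w^γ) ≤ (1/λ)·log₂( Σ_{x ∈ {-1,1}^n} w(x)^{λγ} ) + λn/2, where the sum is taken over the support of w. -/
/-! Bound each maximum `δ(c, v)` by the soft-max `(1/λ) log₂ ∑ₓ v(x)^λ 2^{λ⟨c,x⟩}`, then move the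
average over `c` inside the logarithm by concavity (Jensen). The average of `2^{λ⟨c,x⟩}` over the
cube factorises over coordinates as `cosh(λ ln 2)^n`, and `cosh t ≤ exp(t²/2)` with `ln 2 < 1`
turns its contribution into at most `λ n / 2`. -/

open Finset

open Real

section WeightedRademacher

variable {ι : Type*} [Fintype ι] [DecidableEq ι]

lemma sum_bool_two_rpow_mul_sgn (t : ℝ) (s : Bool) :
    ∑ b : Bool, (2 : ℝ) ^ (t * (sgn b * sgn s)) = 2 * cosh (t * log 2) := by
  cases s <;> simp [sgn, cosh_eq, rpow_def_of_pos] <;> ring_nf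

lemma sum_two_rpow_mul_ip (t : ℝ) (x : ι → Bool) :
    ∑ c : ι → Bool, (2 : ℝ) ^ (t * ip c x) = (2 * cosh (t * log 2)) ^ Fintype.card ι := by
  simp_rw [ip, mul_sum, rpow_sum_of_pos two_pos]
  rw [← Fintype.prod_sum fun i b => (2 : ℝ) ^ (t * (sgn b * sgn (x i)))]
  simp_rw [sum_bool_two_rpow_mul_sgn, prod_const, card_univ]

lemma logb_cosh_mul_log_two_le (t : ℝ) : logb 2 (cosh (t * log 2)) ≤ t ^ 2 / 2 := by
  have hlog2 : 0 < log 2 := log_pos one_lt_two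
  have hlog2_lt_one : log 2 < 1 := log_two_lt_d9.trans (by norm_num)
  have hlog_cosh : log (cosh (t * log 2)) ≤ (t * log 2) ^ 2 / 2 := by
    rw [← log_exp ((t * log 2) ^ 2 / 2)]
    exact log_le_log (cosh_pos _) (cosh_le_exp_half_sq _)
  rw [logb, div_le_iff₀ hlog2]
  nlinarith [mul_nonneg (sq_nonneg t) (mul_nonneg hlog2.le (sub_nonneg.2 hlog2_lt_one.le))]

lemma sum_logb_div_card_le_logb_sum_div_card_s18 {α : Type*} [Fintype α] [Nonempty α]
    (f : α → ℝ) (hf : ∀ a, 0 < f a) :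
    (∑ a, logb 2 (f a)) / Fintype.card α ≤ logb 2 ((∑ a, f a) / Fintype.card α) := by
  have hcard : (0 : ℝ) < Fintype.card α := Nat.cast_pos.2 Fintype.card_pos
  have hjensen := strictConcaveOn_log_Ioi.concaveOn.le_map_sum (t := univ)
    (w := fun _ => (Fintype.card α : ℝ)⁻¹) (p := f) (fun _ _ => by positivity)
    (by simp [card_univ, hcard.ne']) (fun a _ => hf a)
  simp only [smul_eq_mul, ← mul_sum] at hjensen
  simp only [logb, ← sum_div, div_eq_inv_mul _ (Fintype.card α : ℝ)]
  rw [← mul_div_assoc]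
  exact div_le_div_of_nonneg_right hjensen (log_pos one_lt_two).le

noncomputable def tiltedSum (lam : ℝ) (v : (ι → Bool) → ℝ) (c : ι → Bool) : ℝ :=
  ∑ x ∈ univ.filter (fun x => 0 < v x), v x ^ lam * (2 : ℝ) ^ (lam * ip c x)

lemma tiltedSum_pos {v : (ι → Bool) → ℝ} (hv : ∃ x, 0 < v x) (lam : ℝ) (c : ι → Bool) :
    0 < tiltedSum lam v c := by
  obtain ⟨x, hx⟩ := hv
  refine sum_pos (fun y hy => ?_) ⟨x, mem_filter.2 ⟨mem_univ x, hx⟩⟩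
  exact mul_pos (rpow_pos_of_pos (mem_filter.1 hy).2 _) (rpow_pos_of_pos two_pos _)

lemma wdelta_le_logb_tiltedSum {v : (ι → Bool) → ℝ} (hv : ∃ x, 0 < v x) {lam : ℝ}
    (hlam : 0 < lam) (c : ι → Bool) :
    wdelta c v ≤ logb 2 (tiltedSum lam v c) / lam := by
  obtain ⟨x₀, hx₀⟩ := hv
  refine csSup_le ⟨_, x₀, hx₀, rfl⟩ ?_
  rintro _ ⟨x, hx, rfl⟩
  have hterm : ∀ y, 0 < v y → 0 < v y ^ lam * (2 : ℝ) ^ (lam * ip c y) := fun y hy =>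
    mul_pos (rpow_pos_of_pos hy _) (rpow_pos_of_pos two_pos _)
  have hle : v x ^ lam * (2 : ℝ) ^ (lam * ip c x) ≤ tiltedSum lam v c :=
    single_le_sum (f := fun y => v y ^ lam * (2 : ℝ) ^ (lam * ip c y))
      (fun y hy => (hterm y (mem_filter.1 hy).2).le) (mem_filter.2 ⟨mem_univ x, hx⟩)
  have hlog := logb_le_logb_of_le one_lt_two (hterm x hx) hle
  rw [logb_mul (rpow_pos_of_pos hx _).ne' (rpow_pos_of_pos two_pos _).ne',
    logb_rpow_eq_mul_logb_of_pos hx, logb_rpow two_pos (by norm_num)] at hlog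
  rw [le_div_iff₀ hlam]
  linarith

lemma sum_tiltedSum (lam : ℝ) (v : (ι → Bool) → ℝ) :
    ∑ c, tiltedSum lam v c = (∑ x ∈ univ.filter (fun x => 0 < v x), v x ^ lam) *
      (2 * cosh (lam * log 2)) ^ Fintype.card ι := by
  simp_rw [tiltedSum]
  rw [sum_comm, sum_mul]
  refine sum_congr rfl fun x _ => ?_
  rw [← mul_sum, sum_two_rpow_mul_ip]

theorem wRad_le_logb_sum_rpow {v : (ι → Bool) → ℝ} (hv : ∃ x, 0 < v x) {lam : ℝ}
    (hlam : 0 < lam) :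
    wRad v ≤ 1 / lam * logb 2 (∑ x ∈ univ.filter (fun x => 0 < v x), v x ^ lam) +
      lam * Fintype.card ι / 2 := by
  set N := Fintype.card ι
  set Z := ∑ x ∈ univ.filter (fun x => 0 < v x), v x ^ lam
  have hZ : 0 < Z := by
    obtain ⟨x₀, hx₀⟩ := hv
    exact sum_pos (fun x hx => rpow_pos_of_pos (mem_filter.1 hx).2 _)
      ⟨x₀, mem_filter.2 ⟨mem_univ x₀, hx₀⟩⟩
  have hcube : (Fintype.card (ι → Bool) : ℝ) = 2 ^ N := by simp [N]
  calc wRad v = (∑ c, wdelta c v) / Fintype.card (ι → Bool) := by rw [wRad, hcube]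
    _ ≤ (∑ c, logb 2 (tiltedSum lam v c) / lam) / Fintype.card (ι → Bool) := by
      gcongr with c
      exact wdelta_le_logb_tiltedSum hv hlam c
    _ = 1 / lam * ((∑ c, logb 2 (tiltedSum lam v c)) / Fintype.card (ι → Bool)) := by
      rw [← sum_div]; ring
    _ ≤ 1 / lam * logb 2 ((∑ c, tiltedSum lam v c) / Fintype.card (ι → Bool)) := by
      gcongr
      exact sum_logb_div_card_le_logb_sum_div_card_s18 _ (tiltedSum_pos hv lam)
    _ = 1 / lam * (logb 2 Z + N * logb 2 (cosh (lam * log 2))) := by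
      rw [sum_tiltedSum, hcube, mul_pow, mul_div_assoc, mul_div_cancel_left₀ _ (by positivity),
        logb_mul hZ.ne' (pow_pos (cosh_pos _) _).ne', logb_pow]
    _ ≤ 1 / lam * (logb 2 Z + N * (lam ^ 2 / 2)) := by
      gcongr
      exact logb_cosh_mul_log_two_le lam
    _ = 1 / lam * logb 2 Z + lam * N / 2 := by
      field_simp

end WeightedRademacher

theorem stmt18_general (n : ℕ) (w : (Fin n → Bool) → ℝ)
    (hw : ∀ x, 0 ≤ w x) (hsupp : ∃ x, 0 < w x)
    (lam gam : ℝ) (hlam : 0 < lam) (hgam : 0 < gam) :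
    wRad (fun x => w x ^ gam) ≤
      (1 / lam) * Real.logb 2 (∑ x ∈ Finset.univ.filter (fun x => 0 < w x),
        w x ^ (lam * gam)) + lam * n / 2 := by
  have hsupp_rpow : ∀ x, 0 < w x ^ gam ↔ 0 < w x := fun x =>
    ⟨fun h => (hw x).lt_of_ne fun h0 => by simp [← h0, zero_rpow hgam.ne'] at h,
      fun h => rpow_pos_of_pos h _⟩
  have h := wRad_le_logb_sum_rpow (v := fun x => w x ^ gam)
    (hsupp.imp fun x => (hsupp_rpow x).2) hlam
  simpa only [hsupp_rpow, ← rpow_mul (hw _), mul_comm gam, Fintype.card_fin] using h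

theorem stmt18 (n : ℕ) (hn : 0 < n) (w : (Fin n → Bool) → ℝ)
    (hw : ∀ x, 0 ≤ w x) (hsupp : ∃ x, 0 < w x)
    (lam gam : ℝ) (hlam : 0 < lam) (hgam : 0 < gam) :
    wRad (fun x => w x ^ gam) ≤
      (1 / lam) * Real.logb 2 (∑ x ∈ Finset.univ.filter (fun x => 0 < w x),
        w x ^ (lam * gam)) + lam * n / 2 :=
  stmt18_general n w hw hsupp lam gam hlam hgam
end
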